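/- Let s = s_1…s_m be a Lyndon word over {0,1} with m ≥ 2, and write a = L(s) = a_1…a_m for its largest cyclic rotation. Then for all 0 < k < m, a_{k+1}…a_m^+ s_1…s_k ≺ a_1…a_m^+, where a_m^+ means the digit a_m (which is 0, since a ends in 0) is replaced by 1, and ≺ is strict lexicographic order on words of length m, compared position by position. -/

import Mathlib

/-- The cyclic rotation of a binary word `c` by `i`: `c_{i+1}…c_m c_1…c_i`. -/
def rot (c : List Bool) (i : ℕ) : List Bool := c.drop i ++ c.take i

/-- The lexicographically largest cyclic rotation `L(s)` of `s`. -/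
def maxRot (s : List Bool) : List Bool :=
  (List.range s.length).foldl (fun acc i => max acc (rot s i)) s

/-- The lexicographically smallest cyclic rotation `S(s)` of `s`. -/
def minRot (s : List Bool) : List Bool :=
  (List.range s.length).foldl (fun acc i => min acc (rot s i)) s

/-- A binary word is Lyndon if every proper suffix is strictly lexicographically
greater than the prefix of the same length. -/
def IsLyndon (s : List Bool) : Prop :=
  ∀ i, 0 < i → i < s.length → s.take (s.length - i) < s.drop i

namespace Stmt18Aux

/-- Binary value of a bool word. -/
def bval (l : List Bool) : ℕ := l.foldl (fun n b => 2*n + b.toNat) 0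

lemma bval_foldl (l : List Bool) (n : ℕ) :
    l.foldl (fun n b => 2*n + b.toNat) n = n * 2 ^ l.length + bval l := by
  induction l generalizing n with
  | nil => simp [bval]
  | cons b l ih =>
    simp only [List.foldl_cons, List.length_cons, bval] at *
    rw [ih, ih (2*0 + b.toNat)]
    ring

lemma bval_cons (b : Bool) (l : List Bool) :
    bval (b :: l) = b.toNat * 2 ^ l.length + bval l := by
  show List.foldl _ (2*0 + b.toNat) l = _
  rw [bval_foldl]; ring

lemma bval_append (u v : List Bool) :
    bval (u ++ v) = bval u * 2 ^ v.length + bval v := by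
  show List.foldl _ _ _ = _
  rw [List.foldl_append, bval_foldl]; rfl

lemma bval_lt (l : List Bool) : bval l < 2 ^ l.length := by
  induction l with
  | nil => simp [bval]
  | cons b l ih =>
    rw [bval_cons, List.length_cons, pow_succ]
    cases b <;> simp <;> omega

lemma bval_singleton (b : Bool) : bval [b] = b.toNat := by simp [bval]

lemma mul_pow_chain {Bt Bd c y p : ℕ} (h1 : Bt < Bd) (h3 : c < p) :
    Bt * p + c < Bd * p + y :=
  calc Bt * p + c < Bt * p + p := Nat.add_lt_add_left h3 _
  _ = (Bt + 1) * p := by ring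
  _ ≤ Bd * p := mul_le_mul_left h1 p
  _ ≤ Bd * p + y := Nat.le_add_right _ _

lemma bval_lt_of_lex : ∀ {l₁ l₂ : List Bool}, List.Lex (·<·) l₁ l₂ →
    l₁.length = l₂.length → bval l₁ < bval l₂ := by
  intro l₁ l₂ h
  induction h with
  | nil => intro hlen; simp at hlen
  | @rel a l₁ b l₂ hab =>
    intro hlen
    obtain ⟨rfl, rfl⟩ := Bool.lt_iff.1 hab
    simp only [List.length_cons, Nat.add_right_cancel_iff] at hlen
    rw [bval_cons, bval_cons]
    have h1 := bval_lt l₁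
    rw [hlen] at h1
    simp only [Bool.toNat_false, Bool.toNat_true, one_mul, zero_mul, zero_add]
    omega
  | @cons a l₁ l₂ h ih =>
    intro hlen
    simp only [List.length_cons, Nat.add_right_cancel_iff] at hlen
    have := ih hlen
    rw [bval_cons, bval_cons, hlen]
    cases a <;> simp <;> omega

lemma lt_iff_bval {l₁ l₂ : List Bool} (h : l₁.length = l₂.length) :
    l₁ < l₂ ↔ bval l₁ < bval l₂ := by
  constructor
  · intro hlt; exact bval_lt_of_lex hlt h
  · intro hb
    rcases lt_trichotomy l₁ l₂ with h' | h' | h'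
    · exact h'
    · subst h'; omega
    · have := bval_lt_of_lex h' h.symm; omega

lemma le_bval {l₁ l₂ : List Bool} (h : l₁.length = l₂.length) (hle : l₁ ≤ l₂) :
    bval l₁ ≤ bval l₂ := by
  rcases hle.lt_or_eq with h' | h'
  · exact (bval_lt_of_lex h' h).le
  · subst h'; rfl

lemma bval_inj {l₁ l₂ : List Bool} (h : l₁.length = l₂.length)
    (hb : bval l₁ = bval l₂) : l₁ = l₂ := by
  rcases lt_trichotomy l₁ l₂ with h' | h' | h'
  · have := bval_lt_of_lex h' h; omega
  · exact h'
  · have := bval_lt_of_lex h' h.symm; omega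

/- rotation basics -/

lemma rot_length (c : List Bool) (i : ℕ) : (rot c i).length = c.length := by
  simp [rot]; omega

lemma rot_zero (c : List Bool) : rot c 0 = c := by simp [rot]

lemma rot_eq_rotate (c : List Bool) (i : ℕ) (h : i ≤ c.length) :
    rot c i = c.rotate i := (List.rotate_eq_drop_append_take h).symm

/- foldl max -/

lemma le_foldl_max_init {α : Type*} [LinearOrder α] (L : List α) (x : α) :
    x ≤ L.foldl max x := by
  induction L generalizing x with
  | nil => exact le_refl x
  | cons a L ih => exact le_trans (le_max_left x a) (ih (max x a))

lemma le_foldl_max_mem {α : Type*} [LinearOrder α] (L : List α) (x : α)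
    {y : α} (h : y ∈ L) : y ≤ L.foldl max x := by
  induction L generalizing x with
  | nil => simp at h
  | cons a L ih =>
    rcases List.mem_cons.1 h with rfl | h'
    · exact le_trans (le_max_right x y) (le_foldl_max_init L _)
    · exact ih _ h'

lemma foldl_max_cases {α : Type*} [LinearOrder α] (L : List α) (x : α) :
    L.foldl max x = x ∨ L.foldl max x ∈ L := by
  induction L generalizing x with
  | nil => left; rfl
  | cons a L ih =>
    rcases ih (max x a) with h | h
    · rcases max_cases x a with ⟨h', _⟩ | ⟨h', _⟩
      · left; rw [List.foldl_cons, h, h']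
      · right; rw [List.foldl_cons, h, h']; exact List.mem_cons_self
    · right; exact List.mem_cons_of_mem _ h

lemma maxRot_eq_foldl (s : List Bool) :
    maxRot s = ((List.range s.length).map (rot s)).foldl max s := by
  rw [maxRot, List.foldl_map]

lemma rot_le_maxRot (s : List Bool) {i : ℕ} (h : i < s.length) :
    rot s i ≤ maxRot s := by
  rw [maxRot_eq_foldl]
  exact le_foldl_max_mem _ _ (List.mem_map.2 ⟨i, List.mem_range.2 h, rfl⟩)

lemma maxRot_spec (s : List Bool) (h : 0 < s.length) :
    ∃ i < s.length, maxRot s = rot s i := by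
  rw [maxRot_eq_foldl]
  rcases foldl_max_cases ((List.range s.length).map (rot s)) s with h' | h'
  · exact ⟨0, h, by rw [h', rot_zero]⟩
  · obtain ⟨i, hi, hrot⟩ := List.mem_map.1 h'
    exact ⟨i, List.mem_range.1 hi, hrot.symm⟩

lemma bval_take_mono {u v : List Bool} (hlen : u.length = v.length)
    (h : bval u ≤ bval v) (k : ℕ) : bval (u.take k) ≤ bval (v.take k) := by
  by_contra hcon
  push_neg at hcon
  have h3 : bval (v.drop k) < 2 ^ (v.drop k).length := bval_lt _
  have key := mul_pow_chain hcon h3 (y := bval (u.drop k))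
  have e_u : bval u = bval (u.take k) * 2 ^ (v.drop k).length + bval (u.drop k) := by
    nth_rewrite 1 [← List.take_append_drop k u]
    rw [bval_append, List.length_drop, List.length_drop, hlen]
  have e_v : bval v = bval (v.take k) * 2 ^ (v.drop k).length + bval (v.drop k) := by
    nth_rewrite 1 [← List.take_append_drop k v]
    rw [bval_append]
  linarith


end Stmt18Aux

open Stmt18Aux in
/-- For a Lyndon word `s` of length `m ≥ 2` with `a = L(s)`: for all `0 < k < m`,
`a_{k+1} … a_m⁺ s_1 … s_k ≺ a_1 … a_m⁺` in lexicographic order. -/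
theorem stmt18 (s : List Bool) (hm : 2 ≤ s.length) (hL : IsLyndon s) :
    ∀ k, 0 < k → k < s.length →
      ((maxRot s).drop k).dropLast ++ [true] ++ s.take k <
        (maxRot s).dropLast ++ [true] := by
  intro k hk0 hkm
  have hm0 : 0 < s.length := by omega
  obtain ⟨i, him, hai⟩ := maxRot_spec s hm0
  set a := maxRot s with ha
  have hal : a.length = s.length := by rw [hai, rot_length]
  -- strict inequality for rotations of s (Lyndon)
  have hsrot : ∀ j, 0 < j → j < s.length → bval s < bval (rot s j) := by
    intro j h0 hjm
    have hlex : List.Lex (·<·) (s.take (s.length - j)) (s.drop j) := hL j h0 hjm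
    have hb : bval (s.take (s.length - j)) < bval (s.drop j) :=
      bval_lt_of_lex hlex (by
        rw [List.length_take, List.length_drop]; omega)
    have hj' : s.length - (s.length - j) = j := by omega
    have e1 : bval s = bval (s.take (s.length - j)) * 2 ^ j + bval (s.drop (s.length - j)) := by
      nth_rewrite 1 [← List.take_append_drop (s.length - j) s]
      rw [bval_append, List.length_drop, hj']
    have e2 : bval (rot s j) = bval (s.drop j) * 2 ^ j + bval (s.take j) := by
      rw [rot, bval_append, List.length_take, min_eq_left hjm.le]
    have h3 : bval (s.drop (s.length - j)) < 2 ^ j := by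
      have := bval_lt (s.drop (s.length - j))
      rwa [List.length_drop, hj'] at this
    rw [e1, e2]
    exact mul_pow_chain hb h3
  have hrotne : ∀ j, 0 < j → j < s.length → s.rotate j ≠ s := by
    intro j h0 hjm hne
    have h1 := hsrot j h0 hjm
    rw [← rot_eq_rotate s j hjm.le] at hne
    rw [hne] at h1
    omega
  have ha_rotate : a = s.rotate i := by rw [hai, rot_eq_rotate s i him.le]
  have hform : ∀ j, j ≤ s.length → rot a j = rot s ((i + j) % s.length) := by
    intro j hj
    rw [rot_eq_rotate a j (by rw [hal]; omega), ha_rotate, List.rotate_rotate,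
      rot_eq_rotate s _ (Nat.mod_lt _ hm0).le, List.rotate_mod]
  have hle : ∀ j, j < s.length → bval (rot a j) ≤ bval a := by
    intro j hjm
    rw [hform j hjm.le]
    refine le_bval ?_ (rot_le_maxRot s (Nat.mod_lt _ hm0))
    rw [rot_length]; exact hal.symm
  have hstrict : ∀ j, 0 < j → j < s.length → bval (rot a j) < bval a := by
    intro j h0 hjm
    rcases (hle j hjm).lt_or_eq with h | h
    · exact h
    · exfalso
      have heq : rot a j = a := bval_inj (by rw [rot_length]) h
      rw [rot_eq_rotate a j (by rw [hal]; omega), ha_rotate, List.rotate_rotate] at heq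
      have h2 := congrArg (fun l => List.rotate l (s.length - i)) heq
      simp only [List.rotate_rotate] at h2
      rw [(show i + j + (s.length - i) = s.length + j by omega),
        (show i + (s.length - i) = s.length by omega)] at h2
      rw [← List.rotate_rotate, List.rotate_length] at h2
      exact hrotne j h0 hjm h2
  -- a ends with false
  rcases List.eq_nil_or_concat a with hnil | ⟨A, c, hA⟩
  · exfalso; rw [hnil] at hal; simp at hal; omega
  rw [List.concat_eq_append] at hA
  have lA : A.length = s.length - 1 := by
    have := congrArg List.length hA
    simp at this; omega
  have hc : c = false := by
    cases hcc : c
    · rfl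
    · exfalso
      rw [hcc] at hA
      have hs := hstrict (s.length - 1) (by omega) (by omega)
      have e1 : rot a (s.length - 1) = [true] ++ A := by
        rw [rot, hA, List.drop_append_of_le_length (by omega),
          List.take_append_of_le_length (by omega),
          List.drop_eq_nil_of_le (by omega), List.take_of_length_le (by omega)]
        simp
      have e2 : bval a = bval A * 2 + 1 := by
        rw [hA, bval_append, bval_singleton]; norm_num
      have e3 : bval (rot a (s.length - 1)) = 2 ^ (s.length - 1) + bval A := by
        rw [e1, bval_append, bval_singleton, lA]; norm_num
      have hlt := bval_lt A
      rw [lA] at hlt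
      rw [e2, e3] at hs
      omega
  rw [hc] at hA
  -- decompositions
  have eh1 : a.drop k = A.drop k ++ [false] := by
    rw [hA, List.drop_append_of_le_length (by omega)]
  have eh2 : (a.drop k).dropLast = A.drop k := by
    rw [eh1, List.dropLast_concat]
  have eh3 : a.dropLast = A := by rw [hA, List.dropLast_concat]
  have eh4 : a.drop (s.length - k) = A.drop (s.length - k) ++ [false] := by
    rw [hA, List.drop_append_of_le_length (by omega)]
  have eh5 : a.take (s.length - k) = A.take (s.length - k) := by
    rw [hA, List.take_append_of_le_length (by omega)]
  rw [eh2, eh3]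
  refine (lt_iff_bval ?_).mpr ?_
  · simp only [List.length_append, List.length_drop, List.length_take,
      List.length_singleton, lA]
    omega
  -- numeric abbreviations and facts
  have p1 : 2 ^ k = 2 * 2 ^ (k - 1) := by
    rw [← pow_succ']
    congr 1
    omega
  have e_a : bval a = bval A * 2 := by
    rw [hA, bval_append, bval_singleton]; norm_num
  have F_A : bval A = bval (A.take (s.length - k)) * 2 ^ (k - 1)
      + bval (A.drop (s.length - k)) := by
    nth_rewrite 1 [← List.take_append_drop (s.length - k) A]
    rw [bval_append, List.length_drop, lA,
      (show s.length - 1 - (s.length - k) = k - 1 by omega)]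
  have F_A2 : 2 * bval A = bval (A.take (s.length - k)) * 2 ^ k
      + 2 * bval (A.drop (s.length - k)) := by
    rw [p1, F_A]; ring
  have e_rotk : bval (rot a k) = (bval (A.drop k) * 2) * 2 ^ k + bval (a.take k) := by
    rw [rot, eh1, bval_append, bval_append, bval_singleton, List.length_take, hal,
      min_eq_left (by omega : k ≤ s.length)]
    norm_num
  have F1 : bval (A.drop k) * 2 * 2 ^ k + bval (a.take k) < 2 * bval A := by
    have := hstrict k hk0 hkm
    rw [e_rotk, e_a] at this
    omega
  -- the factor fact: bval (s.take k) ≤ 2 * bval (A.drop (s.length - k))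
  have F_stk : bval (s.take k) ≤ 2 * bval (A.drop (s.length - k)) := by
    have hq : (i + (s.length - k)) % s.length < s.length := Nat.mod_lt _ hm0
    have e_rq : rot a (s.length - k) = rot s ((i + (s.length - k)) % s.length) :=
      hform _ (by omega)
    have hsq : bval s ≤ bval (rot s ((i + (s.length - k)) % s.length)) := by
      rcases Nat.eq_zero_or_pos ((i + (s.length - k)) % s.length) with h0 | h0
      · rw [h0, rot_zero]
      · exact (hsrot _ h0 hq).le
    have htm := bval_take_mono (u := s) (v := rot s ((i + (s.length - k)) % s.length))
      (by rw [rot_length]) hsq k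
    have e_take : (rot a (s.length - k)).take k = a.drop (s.length - k) := by
      rw [rot, List.take_append_of_le_length (by rw [List.length_drop, hal]; omega),
        List.take_of_length_le (by rw [List.length_drop, hal]; omega)]
    rw [← e_rq, e_take, eh4, bval_append, bval_singleton] at htm
    simp at htm
    omega
  -- bounds
  have bY : bval (A.drop (s.length - k)) < 2 ^ (k - 1) := by
    have := bval_lt (A.drop (s.length - k))
    rwa [List.length_drop, lA, (show s.length - 1 - (s.length - k) = k - 1 by omega)] at this
  have bstk : bval (s.take k) < 2 ^ k := by
    have := bval_lt (s.take k)
    rwa [List.length_take, min_eq_left hkm.le] at this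
  -- rewrite the goal numerically
  have eL : bval (A.drop k ++ [true] ++ s.take k)
      = (bval (A.drop k) * 2 + 1) * 2 ^ k + bval (s.take k) := by
    rw [bval_append, bval_append, bval_singleton, List.length_take,
      min_eq_left hkm.le]
    norm_num
  have eR : bval (A ++ [true]) = bval A * 2 + 1 := by
    rw [bval_append, bval_singleton]; norm_num
  rw [eL, eR]
  -- case split on 2 * bval (A.drop k) vs bval (A.take (s.length - k))
  have hcase : 2 * bval (A.drop k) ≤ bval (A.take (s.length - k)) := by
    by_contra hcon
    push_neg at hcon
    have hmul2 : (bval (A.take (s.length - k)) + 1) * 2 ^ k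
        ≤ (2 * bval (A.drop k)) * 2 ^ k := mul_le_mul_left hcon (2 ^ k)
    linarith [F1, F_A2, bY, hmul2, p1]
  rcases eq_or_lt_of_le hcase with heq | hlt
  · -- period case: contradiction via maximality at rotation by s.length - k
    have heq' : 2 * bval (A.drop k) * 2 ^ k
        = bval (A.take (s.length - k)) * 2 ^ k := by rw [heq]
    have hBT : bval (a.take k) < 2 * bval (A.drop (s.length - k)) := by
      linarith [F1, F_A2, heq']
    have e_rotmk : bval (rot a (s.length - k))
        = bval (a.drop (s.length - k)) * 2 ^ (s.length - k) + bval (a.take (s.length - k)) := by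
      rw [rot, bval_append, List.length_take, hal, min_eq_left (by omega : s.length - k ≤ s.length)]
    have e_a2 : bval a = bval (a.take k) * 2 ^ (s.length - k) + bval (a.drop k) := by
      nth_rewrite 1 [← List.take_append_drop k a]
      rw [bval_append, List.length_drop, hal]
    have bdropk : bval (a.drop k) < 2 ^ (s.length - k) := by
      have := bval_lt (a.drop k)
      rwa [List.length_drop, hal] at this
    have hD : bval (a.drop (s.length - k)) = 2 * bval (A.drop (s.length - k)) := by
      rw [eh4, bval_append, bval_singleton]; norm_num [mul_comm]
    have hBT' : bval (a.take k) < bval (a.drop (s.length - k)) := by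
      rw [hD]; exact hBT
    have hchain := mul_pow_chain (y := bval (a.take (s.length - k))) hBT' bdropk
    have hcontra := hle (s.length - k) (by omega)
    rw [e_rotmk] at hcontra
    rw [e_a2] at hcontra
    linarith [hchain]
  · -- dominant case
    have hmul : (2 * bval (A.drop k) + 1) * 2 ^ k
        ≤ bval (A.take (s.length - k)) * 2 ^ k := mul_le_mul_left hlt (2 ^ k)
    linarith [hmul, F_stk, F_A2]
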